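/- arXiv:2402.15312 — 2 statements merged into one kernel-verified Lean document; each statement's English description precedes it below -/
import Mathlib

section
/- For any ν ∈ (0,1), any nonzero integer k, any real η, and any t ≥ 0, the pointwise inequality ν^{1/6} ≤ 2·√(ν^{1/3}k²/(k² + ν^{2/3}(η - tk)²)) + (1/2)·ν^{1/2}·|k|^{-1}·|η - tk| holds. -/
open Real Set

lemma aux_scalar (s : ℝ) (hs : 0 ≤ s) :
    1 ≤ 2 / Real.sqrt (1 + s ^ 2) + s / 2 := by
  have h0 : 0 < Real.sqrt (1 + s ^ 2) := Real.sqrt_pos.2 (by positivity)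
  have hsqrt4 : Real.sqrt 4 = 2 := by
    rw [show (4 : ℝ) = 2 ^ 2 by norm_num, Real.sqrt_sq (by norm_num : (0:ℝ) ≤ 2)]
  have hsqrt9 : Real.sqrt 9 = 3 := by
    rw [show (9 : ℝ) = 3 ^ 2 by norm_num, Real.sqrt_sq (by norm_num : (0:ℝ) ≤ 3)]
  rcases le_or_gt 2 s with h2 | h2
  · have : 0 ≤ 2 / Real.sqrt (1 + s ^ 2) := by positivity
    linarith
  rcases le_or_gt s (Real.sqrt 3) with h3 | h3
  · have hsq3 : Real.sqrt 3 ^ 2 = 3 := Real.sq_sqrt (by norm_num)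
    have hss : s ^ 2 ≤ 3 := by nlinarith [Real.sqrt_nonneg 3]
    have hle : Real.sqrt (1 + s ^ 2) ≤ 2 := by
      rw [← hsqrt4]; exact Real.sqrt_le_sqrt (by linarith)
    have h1 : 1 ≤ 2 / Real.sqrt (1 + s ^ 2) := by
      rw [le_div_iff₀ h0]; linarith
    linarith
  · have h1s : 1 ≤ s := by
      have : (1 : ℝ) = Real.sqrt 1 := (Real.sqrt_one).symm
      calc (1:ℝ) = Real.sqrt 1 := this
        _ ≤ Real.sqrt 3 := Real.sqrt_le_sqrt (by norm_num)
        _ ≤ s := h3.le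
    have hle : Real.sqrt (1 + s ^ 2) ≤ 3 := by
      rw [← hsqrt9]; exact Real.sqrt_le_sqrt (by nlinarith)
    have h1 : 2 / 3 ≤ 2 / Real.sqrt (1 + s ^ 2) := by
      rw [div_le_div_iff₀ (by norm_num) h0]; linarith
    linarith

lemma key_ineq (c a b : ℝ) (hc : 0 < c) (ha : 0 < a) (hb : 0 ≤ b) :
    c ≤ 2 * Real.sqrt (c ^ 2 * a ^ 2 / (a ^ 2 + c ^ 4 * b ^ 2)) +
      (1 / 2) * c ^ 3 * a⁻¹ * b := by
  set s := c ^ 2 * b / a with hs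
  have hs0 : 0 ≤ s := by positivity
  have h1 : c ^ 2 * a ^ 2 / (a ^ 2 + c ^ 4 * b ^ 2) = c ^ 2 / (1 + s ^ 2) := by
    have h1s : (0:ℝ) < 1 + s ^ 2 := by positivity
    rw [hs]
    field_simp
  have hsq : Real.sqrt (c ^ 2 / (1 + s ^ 2)) = c / Real.sqrt (1 + s ^ 2) := by
    rw [Real.sqrt_div (sq_nonneg c), Real.sqrt_sq hc.le]
  have h2 : (1 / 2) * c ^ 3 * a⁻¹ * b = c * s / 2 := by
    rw [hs]; field_simp
  rw [h1, hsq, h2]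
  have haux := aux_scalar s hs0
  have hmul := mul_le_mul_of_nonneg_left haux hc.le
  have heq : c * (2 / Real.sqrt (1 + s ^ 2) + s / 2)
      = 2 * (c / Real.sqrt (1 + s ^ 2)) + c * s / 2 := by ring
  rw [mul_one, heq] at hmul
  exact hmul

/-- Pointwise inequality underlying enhanced dissipation:
`ν^{1/6} ≤ 2 √(ν^{1/3}k²/(k²+ν^{2/3}(η-tk)²)) + (1/2) ν^{1/2} |k|⁻¹ |η-tk|`. -/
theorem stmt_2 (ν : ℝ) (hν : ν ∈ Set.Ioo (0 : ℝ) 1) (k : ℤ) (hk : k ≠ 0) (η t : ℝ)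
    (ht : 0 ≤ t) :
    ν ^ ((1 : ℝ) / 6) ≤
      2 * Real.sqrt (ν ^ ((1 : ℝ) / 3) * (k : ℝ) ^ 2 /
          ((k : ℝ) ^ 2 + ν ^ ((2 : ℝ) / 3) * (η - t * k) ^ 2)) +
        (1 / 2) * ν ^ ((1 : ℝ) / 2) * |(k : ℝ)|⁻¹ * |η - t * k| := by
  obtain ⟨hν0, hν1⟩ := hν
  set c : ℝ := ν ^ ((1 : ℝ) / 6) with hcdef
  have hc : 0 < c := Real.rpow_pos_of_pos hν0 _
  have h13 : ν ^ ((1 : ℝ) / 3) = c ^ 2 := by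
    rw [hcdef, ← Real.rpow_natCast (ν ^ ((1:ℝ)/6)) 2, ← Real.rpow_mul hν0.le]
    norm_num
  have h23 : ν ^ ((2 : ℝ) / 3) = c ^ 4 := by
    rw [hcdef, ← Real.rpow_natCast (ν ^ ((1:ℝ)/6)) 4, ← Real.rpow_mul hν0.le]
    norm_num
  have h12 : ν ^ ((1 : ℝ) / 2) = c ^ 3 := by
    rw [hcdef, ← Real.rpow_natCast (ν ^ ((1:ℝ)/6)) 3, ← Real.rpow_mul hν0.le]
    norm_num
  have hk2 : ((k : ℝ)) ^ 2 = |(k : ℝ)| ^ 2 := (sq_abs _).symm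
  have hb2 : (η - t * k) ^ 2 = |η - t * k| ^ 2 := (sq_abs _).symm
  rw [h13, h23, h12, hk2, hb2]
  exact key_ineq c |(k : ℝ)| |η - t * k| hc
    (abs_pos.2 (by exact_mod_cast hk)) (abs_nonneg _)
end

section
/- For any a ≥ 0, any t ≥ 0, any integer k, real η and integer l, the inequality ⟨t⟩^{a} · |k, η-tk, l|^{a} ≥ c_a |k, η, l|^{a} holds for all (k,η,l) with k ≠ 0 or the frequency vector nonzero, with a constant c_a > 0 depending only on a. -/
open Real

/-- Shearing in time reduces frequencies by at most a factor `⟨t⟩`: for every `a ≥ 0`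
there is `c_a > 0` with `c_a |k,η,l|^a ≤ ⟨t⟩^a |k, η-tk, l|^a` for all `t ≥ 0` and
nonzero frequency vectors `(k,η,l)`. -/
theorem stmt_8 (a : ℝ) (ha : 0 ≤ a) :
    ∃ c : ℝ, 0 < c ∧ ∀ (k l : ℤ) (η t : ℝ), 0 ≤ t → ¬(k = 0 ∧ η = 0 ∧ l = 0) →
      c * ((k : ℝ) ^ 2 + η ^ 2 + (l : ℝ) ^ 2) ^ (a / 2) ≤
        Real.sqrt (1 + t ^ 2) ^ a *
          ((k : ℝ) ^ 2 + (η - t * k) ^ 2 + (l : ℝ) ^ 2) ^ (a / 2) := by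
  refine ⟨(2 : ℝ) ^ (-(a / 2)), Real.rpow_pos_of_pos two_pos _, ?_⟩
  intro k l η t ht _
  set X : ℝ := (k : ℝ) ^ 2 + η ^ 2 + (l : ℝ) ^ 2 with hX
  set Y : ℝ := (k : ℝ) ^ 2 + (η - t * k) ^ 2 + (l : ℝ) ^ 2 with hY
  have hXnn : 0 ≤ X := by positivity
  have hYnn : 0 ≤ Y := by positivity
  have h1t : (0:ℝ) ≤ 1 + t ^ 2 := by positivity
  have key : X ≤ 2 * (1 + t ^ 2) * Y := by
    nlinarith [sq_nonneg (η - 2 * (t * (k:ℝ))), sq_nonneg (t * (k:ℝ)), sq_nonneg (k:ℝ),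
      sq_nonneg (l:ℝ), sq_nonneg t, sq_nonneg (η - t * (k:ℝ)), sq_nonneg (t * (η - t * (k:ℝ)))]
  have ha2 : 0 ≤ a / 2 := by linarith
  have hmono : X ^ (a/2) ≤ (2 * (1 + t ^ 2) * Y) ^ (a/2) :=
    Real.rpow_le_rpow hXnn key ha2
  have hsplit : (2 * (1 + t ^ 2) * Y) ^ (a/2)
      = 2 ^ (a/2) * (1 + t ^ 2) ^ (a/2) * Y ^ (a/2) := by
    rw [Real.mul_rpow (by positivity) hYnn, Real.mul_rpow (by norm_num) h1t]
  have hsqrt : Real.sqrt (1 + t ^ 2) ^ a = (1 + t ^ 2) ^ (a/2) := by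
    rw [Real.sqrt_eq_rpow, ← Real.rpow_mul h1t]
    rw [one_div, inv_mul_eq_div]
  have hc : (2:ℝ) ^ (-(a/2)) * 2 ^ (a/2) = 1 := by
    rw [← Real.rpow_add two_pos]; norm_num
  calc (2:ℝ) ^ (-(a/2)) * X ^ (a/2)
      ≤ (2:ℝ) ^ (-(a/2)) * (2 ^ (a/2) * (1 + t ^ 2) ^ (a/2) * Y ^ (a/2)) := by
        rw [← hsplit]
        exact mul_le_mul_of_nonneg_left hmono (le_of_lt (Real.rpow_pos_of_pos two_pos _))
    _ = (1 + t ^ 2) ^ (a/2) * Y ^ (a/2) := by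
        rw [show (2:ℝ) ^ (-(a/2)) * (2 ^ (a/2) * (1 + t ^ 2) ^ (a/2) * Y ^ (a/2))
          = ((2:ℝ) ^ (-(a/2)) * 2 ^ (a/2)) * ((1 + t ^ 2) ^ (a/2) * Y ^ (a/2)) by ring, hc,
          one_mul]
    _ = Real.sqrt (1 + t ^ 2) ^ a * Y ^ (a/2) := by rw [hsqrt]
end
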